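/- Let u = a r/(a − |r|) with a = −k/(2H) and 0 < |r| < a. The orthogonal reflection v of u in the directrix plane D = d + K^⊥ (d = |L|² K/|K|²), given by v = u − 2((u − d)·K) K/|K|², equals a r/(a − |r|) − |r| t/(a − |r|), where t = K/(μH). -/

import Mathlib

open RealInnerProductSpace
noncomputable def cross3 (a b : EuclideanSpace ℝ (Fin 3)) : EuclideanSpace ℝ (Fin 3) :=
  WithLp.toLp 2 ![a 1 * b 2 - a 2 * b 1, a 2 * b 0 - a 0 * b 2, a 0 * b 1 - a 1 * b 0]

/-!
The directrix plane is `{x | ⟪x, K⟫ = ‖L‖²}`, so reflecting `u = c • r` in it subtracts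
`2 (c ⟪r, K⟫ - ‖L‖²) / ‖K‖² • K`. The two Laplace–Runge–Lenz identities
`⟪r, K⟫ = ‖L‖² - kμ‖r‖` and `‖K‖² = 2μH‖L‖² + k²μ²`, together with `k = -2Ha`,
turn this coefficient into `‖r‖ / ((a - ‖r‖) μH)`, i.e. the reflection moves `u` by
`-‖r‖ / (a - ‖r‖) • t`.
-/

open Matrix

section cross3

variable (a b c e : EuclideanSpace ℝ (Fin 3))

theorem cross3_eq_toLp_crossProduct : cross3 a b = WithLp.toLp 2 (a.ofLp ⨯₃ b.ofLp) := by
  rw [cross_apply]; rfl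

theorem real_inner_eq_dotProduct_ofLp : ⟪a, b⟫ = a.ofLp ⬝ᵥ b.ofLp := by
  rw [EuclideanSpace.inner_eq_star_dotProduct, star_trivial, dotProduct_comm]

theorem real_inner_cross3_cross3 :
    ⟪cross3 a b, cross3 c e⟫ = ⟪a, c⟫ * ⟪b, e⟫ - ⟪a, e⟫ * ⟪b, c⟫ := by
  simp only [real_inner_eq_dotProduct_ofLp, cross3_eq_toLp_crossProduct, cross_dot_cross]

theorem real_inner_cross3_self_right : ⟪b, cross3 a b⟫ = 0 := by
  rw [real_inner_eq_dotProduct_ofLp, cross3_eq_toLp_crossProduct, dot_cross_self]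

theorem real_inner_cross3_cyclic : ⟪a, cross3 b c⟫ = ⟪c, cross3 a b⟫ := by
  simp only [real_inner_eq_dotProduct_ofLp, cross3_eq_toLp_crossProduct]
  rw [triple_product_permutation, triple_product_permutation]

end cross3

noncomputable def laplaceRungeLenz (μ k : ℝ) (r p : EuclideanSpace ℝ (Fin 3)) :
    EuclideanSpace ℝ (Fin 3) :=
  cross3 p (cross3 r p) - (k * μ / ‖r‖) • r

theorem real_inner_cross3_cross3_self (r p : EuclideanSpace ℝ (Fin 3)) :
    ⟪r, cross3 p (cross3 r p)⟫ = ‖cross3 r p‖ ^ 2 := by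
  rw [real_inner_cross3_cyclic, real_inner_self_eq_norm_sq]

theorem norm_cross3_cross3_sq (r p : EuclideanSpace ℝ (Fin 3)) :
    ‖cross3 p (cross3 r p)‖ ^ 2 = ‖p‖ ^ 2 * ‖cross3 r p‖ ^ 2 := by
  simp only [← real_inner_self_eq_norm_sq]
  rw [real_inner_cross3_cross3, real_inner_cross3_self_right]
  ring

theorem real_inner_laplaceRungeLenz (μ k : ℝ) (r p : EuclideanSpace ℝ (Fin 3)) :
    ⟪r, laplaceRungeLenz μ k r p⟫ = ‖cross3 r p‖ ^ 2 - k * μ * ‖r‖ := by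
  rw [laplaceRungeLenz, inner_sub_right, real_inner_smul_right, real_inner_self_eq_norm_sq,
    real_inner_cross3_cross3_self]
  rcases eq_or_ne ‖r‖ 0 with hr | hr
  · simp [hr]
  · field_simp

theorem norm_laplaceRungeLenz_sq (k : ℝ) (p : EuclideanSpace ℝ (Fin 3)) {μ : ℝ}
    {r : EuclideanSpace ℝ (Fin 3)} (hμ : μ ≠ 0) (hr : r ≠ 0) :
    ‖laplaceRungeLenz μ k r p‖ ^ 2 =
      2 * μ * (‖p‖ ^ 2 / (2 * μ) - k / ‖r‖) * ‖cross3 r p‖ ^ 2 + k ^ 2 * μ ^ 2 := by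
  have hr0 : ‖r‖ ≠ 0 := norm_ne_zero_iff.mpr hr
  rw [laplaceRungeLenz, norm_sub_sq_real, real_inner_smul_right, real_inner_comm,
    real_inner_cross3_cross3_self, norm_smul, norm_cross3_cross3_sq, Real.norm_eq_abs, mul_pow,
    sq_abs]
  field_simp

theorem directrix_reflection_coeff {E : Type*} [NormedAddCommGroup E] [InnerProductSpace ℝ E]
    {r K : E} {μ k H a ℓ : ℝ} (hK : K ≠ 0) (hμ : μ ≠ 0) (hH : H ≠ 0) (hra : a ≠ ‖r‖)
    (ha : a = -k / (2 * H)) (hrK : ⟪r, K⟫ = ℓ - k * μ * ‖r‖)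
    (hK2 : ‖K‖ ^ 2 = 2 * μ * H * ℓ + k ^ 2 * μ ^ 2) :
    2 * ⟪(a / (a - ‖r‖)) • r - (ℓ / ‖K‖ ^ 2) • K, K⟫ / ‖K‖ ^ 2 =
      ‖r‖ / ((a - ‖r‖) * (μ * H)) := by
  have hK0 : ‖K‖ ^ 2 ≠ 0 := by positivity
  have har : a - ‖r‖ ≠ 0 := sub_ne_zero.mpr hra
  have hk : k = -(2 * H * a) := by rw [ha]; field_simp
  rw [inner_sub_left, real_inner_smul_left, real_inner_smul_left, real_inner_self_eq_norm_sq,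
    div_mul_cancel₀ _ hK0, div_eq_div_iff hK0 (by positivity), hK2, hrK, hk]
  field_simp
  ring

theorem reflection_of_u_in_directrix_general
    (r p : EuclideanSpace ℝ (Fin 3)) (μ k H a : ℝ)
    (hr : r ≠ 0) (hμ : 0 < μ)
    (L : EuclideanSpace ℝ (Fin 3)) (hL : L = cross3 r p)
    (hH : H = ‖p‖ ^ 2 / (2 * μ) - k / ‖r‖) (hHneg : H < 0)
    (K d t u v : EuclideanSpace ℝ (Fin 3))
    (hK : K = cross3 p L - ((k * μ) / ‖r‖) • r) (hKne : K ≠ 0)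
    (ha : a = -k / (2 * H)) (hra : ‖r‖ < a)
    (hd : d = (‖L‖ ^ 2 / ‖K‖ ^ 2) • K)
    (ht : t = (μ * H)⁻¹ • K)
    (hu : u = (a / (a - ‖r‖)) • r)
    (hv : v = u - ((2 * ⟪u - d, K⟫) / ‖K‖ ^ 2) • K) :
    v = (a / (a - ‖r‖)) • r - (‖r‖ / (a - ‖r‖)) • t := by
  subst hL
  replace hK : K = laplaceRungeLenz μ k r p := hK
  have hrK : ⟪r, K⟫ = ‖cross3 r p‖ ^ 2 - k * μ * ‖r‖ := hK ▸ real_inner_laplaceRungeLenz μ k r p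
  have hK2 : ‖K‖ ^ 2 = 2 * μ * H * ‖cross3 r p‖ ^ 2 + k ^ 2 * μ ^ 2 :=
    hH ▸ hK ▸ norm_laplaceRungeLenz_sq k p hμ.ne' hr
  rw [hv, hu, hd, directrix_reflection_coeff hKne hμ.ne' hHneg.ne hra.ne' ha hrK hK2, ht,
    smul_smul]
  congr 2
  field_simp

/-- The orthogonal reflection of u = a r/(a−|r|) in the directrix plane d + K^⊥ equals
a r/(a−|r|) − |r| t/(a−|r|), where t = K/(μH). -/
theorem reflection_of_u_in_directrix
    (r p : EuclideanSpace ℝ (Fin 3)) (μ k H a : ℝ)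
    (hr : r ≠ 0) (hμ : 0 < μ) (hk : 0 < k)
    (L : EuclideanSpace ℝ (Fin 3)) (hL : L = cross3 r p) (hLne : L ≠ 0)
    (hH : H = ‖p‖ ^ 2 / (2 * μ) - k / ‖r‖) (hHneg : H < 0)
    (K d t u v : EuclideanSpace ℝ (Fin 3))
    (hK : K = cross3 p L - ((k * μ) / ‖r‖) • r) (hKne : K ≠ 0)
    (ha : a = -k / (2 * H)) (hra : ‖r‖ < a)
    (hd : d = (‖L‖ ^ 2 / ‖K‖ ^ 2) • K)
    (ht : t = (μ * H)⁻¹ • K)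
    (hu : u = (a / (a - ‖r‖)) • r)
    (hv : v = u - ((2 * ⟪u - d, K⟫) / ‖K‖ ^ 2) • K) :
    v = (a / (a - ‖r‖)) • r - (‖r‖ / (a - ‖r‖)) • t :=
  reflection_of_u_in_directrix_general r p μ k H a hr hμ L hL hH hHneg K d t u v hK hKne ha hra hd
    ht hu hv
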